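/- arXiv:2011.10828 — 3 statements merged into one kernel-verified Lean document; each statement's English description precedes it below -/
import Mathlib

section
/- Let 0 < s < 1 and B, μ > 0. Then ∫_0^∞ (μ/((1+ρ) sinh(ρμ/(1+ρ))))² · (sinh(ρμ/(1+ρ)) / sinh(μ/(1+ρ)))^s · exp(-Bμ/tanh(ρμ/(1+ρ))) dρ = B^{s-1} (μ/sinh μ)^s Γ(1-s) exp(-Bμ/tanh μ). -/
/-!
Write `b = ρμ/(1+ρ)`, so that `μ - b = μ/(1+ρ)`. The paper's substitution is
`τ = Bμ (coth b - coth μ) = (Bμ / sinh μ) · sinh (μ/(1+ρ)) / sinh b`;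
it decreases from `∞` to `0` on `(0, ∞)`, with `dτ/dρ = -B (μ / ((1+ρ) sinh b))²`.
In terms of `τ` the integrand is
`B^(s-1) (μ / sinh μ)^s e^(-Bμ coth μ) · e^(-τ) τ^(-s) · |dτ/dρ|`,
and `∫₀^∞ e^(-τ) τ^(-s) dτ = Γ(1-s)`.
-/

open Real MeasureTheory Set Filter Topology

namespace Real

theorem inv_tanh_eq (x : ℝ) : (tanh x)⁻¹ = cosh x / sinh x := by
  rw [tanh_eq_sinh_div_cosh, inv_div]

theorem inv_tanh_sub_inv_tanh {x y : ℝ} (hx : sinh x ≠ 0) (hy : sinh y ≠ 0) :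
    (tanh x)⁻¹ - (tanh y)⁻¹ = sinh (y - x) / (sinh x * sinh y) := by
  rw [inv_tanh_eq, inv_tanh_eq, sinh_sub]
  field_simp

theorem hasDerivAt_inv_tanh {x : ℝ} (hx : sinh x ≠ 0) :
    HasDerivAt (fun y => (tanh y)⁻¹) (-(sinh x ^ 2)⁻¹) x := by
  simp only [inv_tanh_eq]
  refine ((hasDerivAt_cosh x).div (hasDerivAt_sinh x) hx).congr_deriv ?_
  rw [← sq, ← sq, cosh_sq]
  field_simp
  ring

theorem tendsto_inv_tanh_nhdsGT_zero : Tendsto (fun x => (tanh x)⁻¹) (𝓝[>] 0) atTop := by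
  have hcosh : Tendsto cosh (𝓝[>] 0) (𝓝 1) := by
    simpa using
      continuous_cosh.continuousAt.tendsto.mono_left (nhdsWithin_le_nhds (a := (0:ℝ)))
  have hsinh : Tendsto sinh (𝓝[>] 0) (𝓝[>] 0) := by
    refine tendsto_nhdsWithin_of_tendsto_nhds_of_eventually_within _ ?_ ?_
    · simpa using
        continuous_sinh.continuousAt.tendsto.mono_left (nhdsWithin_le_nhds (a := (0:ℝ)))
    · exact eventually_mem_nhdsWithin.mono fun x hx => sinh_pos_iff.2 hx
  simpa only [inv_tanh_eq, div_eq_mul_inv, Function.comp_def] using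
    hcosh.pos_mul_atTop one_pos (tendsto_inv_nhdsGT_zero.comp hsinh)

end Real

noncomputable def cothSubst (B μ ρ : ℝ) : ℝ :=
  B * μ * ((tanh (ρ * μ / (1 + ρ)))⁻¹ - (tanh μ)⁻¹)

section cothSubst

variable {B μ ρ : ℝ}

theorem sinh_mul_div_one_add_pos (hμ : 0 < μ) (hρ : 0 < ρ) : 0 < sinh (ρ * μ / (1 + ρ)) :=
  sinh_pos_iff.2 (by positivity)

theorem cothSubst_eq (hμ : 0 < μ) (hρ : 0 < ρ) :
    cothSubst B μ ρ = B * μ / sinh μ * (sinh (μ / (1 + ρ)) / sinh (ρ * μ / (1 + ρ))) := by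
  have hsub : μ - ρ * μ / (1 + ρ) = μ / (1 + ρ) := by field_simp; ring
  rw [cothSubst, inv_tanh_sub_inv_tanh (sinh_mul_div_one_add_pos hμ hρ).ne'
    (sinh_pos_iff.2 hμ).ne', hsub]
  field_simp

theorem cothSubst_pos (hB : 0 < B) (hμ : 0 < μ) (hρ : 0 < ρ) : 0 < cothSubst B μ ρ := by
  have := sinh_mul_div_one_add_pos hμ hρ
  have : 0 < sinh (μ / (1 + ρ)) := sinh_pos_iff.2 (by positivity)
  have := sinh_pos_iff.2 hμ
  rw [cothSubst_eq hμ hρ]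
  positivity

theorem hasDerivAt_cothSubst (hμ : 0 < μ) (hρ : 0 < ρ) :
    HasDerivAt (cothSubst B μ) (-(B * (μ / ((1 + ρ) * sinh (ρ * μ / (1 + ρ)))) ^ 2)) ρ := by
  have h1ρ : 1 + ρ ≠ 0 := by positivity
  have hb : HasDerivAt (fun ρ => ρ * μ / (1 + ρ)) (μ / (1 + ρ) ^ 2) ρ := by
    refine (((hasDerivAt_id ρ).mul_const μ).div ((hasDerivAt_id ρ).const_add 1) h1ρ).congr_deriv
      ?_
    simp only [id, one_mul, mul_one]
    ring
  refine ((((hasDerivAt_inv_tanh (sinh_mul_div_one_add_pos hμ hρ).ne').comp ρ hb).sub_const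
    (tanh μ)⁻¹).const_mul (B * μ)).congr_deriv ?_
  field_simp

theorem tendsto_cothSubst_atTop (hμ : 0 < μ) : Tendsto (cothSubst B μ) atTop (𝓝 0) := by
  have hb : Tendsto (fun ρ => ρ * μ / (1 + ρ)) atTop (𝓝 μ) := by
    have h : Tendsto (fun ρ : ℝ => μ - μ / (1 + ρ)) atTop (𝓝 (μ - 0)) :=
      tendsto_const_nhds.sub (tendsto_const_nhds.div_atTop
        (tendsto_atTop_add_const_left atTop 1 tendsto_id))
    rw [sub_zero] at h
    refine h.congr' ((eventually_gt_atTop 0).mono fun ρ hρ => ?_)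
    field_simp
    ring
  have hcoth : ContinuousAt (fun x => (tanh x)⁻¹) μ :=
    (hasDerivAt_inv_tanh (sinh_pos_iff.2 hμ).ne').continuousAt
  have h := ((hcoth.tendsto.comp hb).sub_const (tanh μ)⁻¹).const_mul (B * μ)
  rw [sub_self, mul_zero] at h
  exact h

theorem tendsto_cothSubst_nhdsGT_zero (hB : 0 < B) (hμ : 0 < μ) :
    Tendsto (cothSubst B μ) (𝓝[>] 0) atTop := by
  have hb : Tendsto (fun ρ => ρ * μ / (1 + ρ)) (𝓝[>] 0) (𝓝[>] 0) := by
    refine tendsto_nhdsWithin_of_tendsto_nhds_of_eventually_within _ ?_ ?_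
    · have : ContinuousAt (fun ρ : ℝ => ρ * μ / (1 + ρ)) 0 := by fun_prop (disch := norm_num)
      simpa using this.tendsto.mono_left nhdsWithin_le_nhds
    · exact eventually_mem_nhdsWithin.mono fun ρ (hρ : 0 < ρ) => mem_Ioi.2 (by positivity)
  exact (tendsto_atTop_add_const_right _ (-(tanh μ)⁻¹)
    (tendsto_inv_tanh_nhdsGT_zero.comp hb)).const_mul_atTop (by positivity)

theorem continuousOn_cothSubst (hμ : 0 < μ) : ContinuousOn (cothSubst B μ) (Ioi 0) :=
  fun _ hρ => (hasDerivAt_cothSubst hμ hρ).continuousAt.continuousWithinAt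

theorem image_cothSubst_Ioi (hB : 0 < B) (hμ : 0 < μ) : cothSubst B μ '' Ioi 0 = Ioi 0 := by
  refine (image_subset_iff.2 fun ρ hρ => cothSubst_pos hB hμ hρ).antisymm ?_
  exact isPreconnected_Ioi.intermediate_value_Ioi (le_principal_iff.2 (Ioi_mem_atTop 0))
    (le_principal_iff.2 self_mem_nhdsWithin) (continuousOn_cothSubst hμ)
    (tendsto_cothSubst_atTop hμ) (tendsto_cothSubst_nhdsGT_zero hB hμ)

theorem antitoneOn_cothSubst (hB : 0 < B) (hμ : 0 < μ) : AntitoneOn (cothSubst B μ) (Ioi 0) := by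
  refine antitoneOn_of_hasDerivWithinAt_nonpos (convex_Ioi 0) (continuousOn_cothSubst hμ)
    (f' := fun ρ => -(B * (μ / ((1 + ρ) * sinh (ρ * μ / (1 + ρ)))) ^ 2))
    (fun ρ hρ => ?_) (fun ρ _ => ?_)
  · rw [interior_Ioi] at hρ ⊢
    exact (hasDerivAt_cothSubst hμ hρ).hasDerivWithinAt
  · have := hB.le
    exact neg_nonpos.2 (by positivity)

theorem integral_comp_cothSubst (hB : 0 < B) (hμ : 0 < μ) (g : ℝ → ℝ) :
    ∫ ρ in Ioi 0, B * (μ / ((1 + ρ) * sinh (ρ * μ / (1 + ρ)))) ^ 2 * g (cothSubst B μ ρ) =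
      ∫ t in Ioi 0, g t := by
  conv_rhs => rw [← image_cothSubst_Ioi hB hμ]
  rw [integral_image_eq_integral_deriv_smul_of_antitoneOn
    measurableSet_Ioi (fun ρ hρ => (hasDerivAt_cothSubst hμ hρ).hasDerivWithinAt)
    (antitoneOn_cothSubst hB hμ)]
  simp only [neg_neg, smul_eq_mul]

theorem integrand_eq_mul_comp_cothSubst (s : ℝ) (hB : 0 < B) (hμ : 0 < μ) (hρ : 0 < ρ) :
    (μ / ((1 + ρ) * sinh (ρ * μ / (1 + ρ)))) ^ 2
        * (sinh (ρ * μ / (1 + ρ)) / sinh (μ / (1 + ρ))) ^ s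
        * exp (-(B * μ) / tanh (ρ * μ / (1 + ρ)))
      = B ^ (s - 1) * (μ / sinh μ) ^ s * exp (-(B * μ) / tanh μ)
        * (B * (μ / ((1 + ρ) * sinh (ρ * μ / (1 + ρ)))) ^ 2
          * (exp (-cothSubst B μ ρ) * cothSubst B μ ρ ^ (-s))) := by
  have hτ := cothSubst_pos hB hμ hρ
  have := sinh_pos_iff.2 hμ
  have hexp : exp (-(B * μ) / tanh (ρ * μ / (1 + ρ)))
      = exp (-(B * μ) / tanh μ) * exp (-cothSubst B μ ρ) := by
    rw [← exp_add, cothSubst]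
    congr 1
    ring
  have hratio : sinh (ρ * μ / (1 + ρ)) / sinh (μ / (1 + ρ))
      = B * (μ / sinh μ) / cothSubst B μ ρ := by
    have : 0 < sinh (μ / (1 + ρ)) := sinh_pos_iff.2 (by positivity)
    rw [cothSubst_eq hμ hρ]
    field_simp
  have hpow : (B * (μ / sinh μ) / cothSubst B μ ρ) ^ s
      = B ^ (s - 1) * (μ / sinh μ) ^ s * B * cothSubst B μ ρ ^ (-s) := by
    rw [div_rpow (by positivity) hτ.le, mul_rpow hB.le (by positivity), rpow_neg hτ.le,
      rpow_sub_one hB.ne']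
    field_simp
  rw [hexp, hratio, hpow]
  ring

end cothSubst

theorem stmt_2_general (s : ℝ) (hs1 : s < 1) (B μ : ℝ) (hB : 0 < B) (hμ : 0 < μ) :
    ∫ ρ in Ioi (0:ℝ),
        (μ / ((1+ρ) * Real.sinh (ρ*μ/(1+ρ))))^2
          * (Real.sinh (ρ*μ/(1+ρ)) / Real.sinh (μ/(1+ρ))) ^ s
          * Real.exp (-(B*μ) / Real.tanh (ρ*μ/(1+ρ)))
      = B ^ (s - 1) * (μ / Real.sinh μ) ^ s * Real.Gamma (1 - s)
          * Real.exp (-(B*μ) / Real.tanh μ) := by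
  rw [setIntegral_congr_fun measurableSet_Ioi
      fun ρ hρ => integrand_eq_mul_comp_cothSubst s hB hμ hρ,
    integral_const_mul, integral_comp_cothSubst hB hμ fun t => exp (-t) * t ^ (-s),
    Gamma_eq_integral (by linarith), sub_sub_cancel_left]
  ring

theorem stmt_2 (s : ℝ) (hs0 : 0 < s) (hs1 : s < 1) (B μ : ℝ) (hB : 0 < B) (hμ : 0 < μ) :
    ∫ ρ in Ioi (0:ℝ),
        (μ / ((1+ρ) * Real.sinh (ρ*μ/(1+ρ))))^2
          * (Real.sinh (ρ*μ/(1+ρ)) / Real.sinh (μ/(1+ρ))) ^ s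
          * Real.exp (-(B*μ) / Real.tanh (ρ*μ/(1+ρ)))
      = B ^ (s - 1) * (μ / Real.sinh μ) ^ s * Real.Gamma (1 - s)
          * Real.exp (-(B*μ) / Real.tanh μ) :=
  stmt_2_general s hs1 B μ hB hμ
end

section
/- Define, for 0 < s < 1 and μ > 0, the function h_{s,μ}(ρ) = (μ/sinh μ)·(sinh(ρμ/(1+ρ))/sinh(μ/(1+ρ)))^s · [ (μ/sinh μ)·(ρ/(1+ρ)²)·( sinh(ρμ/(1+ρ))/sinh(μ/(1+ρ)) + 2cosh μ + sinh(μ/(1+ρ))/sinh(ρμ/(1+ρ)) ) − 1 ] for ρ > 0. Then for every ρ > 0, h'_{s,μ}(ρ) = ρ^s · d/dρ [ ((ρμ/(1+ρ))/sinh(ρμ/(1+ρ)))^{1−s} · ((μ/(1+ρ))/sinh(μ/(1+ρ)))^{1+s} ]. -/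
/-!
Write `a = ρμ/(1+ρ)` and `b = μ/(1+ρ)`, so that `a + b = μ` and `a = ρ b`. By
`sinh² μ = sinh² a + sinh² b + 2 sinh a sinh b cosh μ` we have
`h = r^s Φ - (μ / sinh μ) r^s` with `r = sinh a / sinh b` and `Φ = (a / sinh a)(b / sinh b)`, while
the function differentiated on the right is `ρ^(-s) r^s Φ`. Hence the claim reduces to
`(μ / sinh μ) (r^s)' = s r^s Φ / ρ`, which follows from `coth a + coth b = sinh μ / (sinh a sinh b)`.
-/

open Real

/-- The auxiliary function `h_{s,μ}` from Section 3 of the paper. -/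
noncomputable def hFun (s μ ρ : ℝ) : ℝ :=
  (μ / Real.sinh μ) * (Real.sinh (ρ*μ/(1+ρ)) / Real.sinh (μ/(1+ρ))) ^ s *
    ((μ / Real.sinh μ) * (ρ/(1+ρ)^2) *
      (Real.sinh (ρ*μ/(1+ρ)) / Real.sinh (μ/(1+ρ)) + 2 * Real.cosh μ
        + Real.sinh (μ/(1+ρ)) / Real.sinh (ρ*μ/(1+ρ))) - 1)

noncomputable def xDivSinh (x : ℝ) : ℝ := x / sinh x

noncomputable def sinhRatio (μ ρ : ℝ) : ℝ := sinh (ρ * μ / (1 + ρ)) / sinh (μ / (1 + ρ))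

noncomputable def xDivSinhProd (μ ρ : ℝ) : ℝ := xDivSinh (ρ * μ / (1 + ρ)) * xDivSinh (μ / (1 + ρ))

lemma sinh_add_sq (u v : ℝ) :
    sinh (u + v) ^ 2 = sinh u ^ 2 + sinh v ^ 2 + 2 * sinh u * sinh v * cosh (u + v) := by
  rw [sinh_add, cosh_add]
  linear_combination sinh u ^ 2 * cosh_sq v + sinh v ^ 2 * cosh_sq u

lemma rpow_one_sub_mul_rpow_one_add {p q : ℝ} (hp : 0 < p) (hq : 0 < q) (s : ℝ) :
    p ^ (1 - s) * q ^ (1 + s) = (p / q) ^ (-s) * (p * q) := by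
  rw [sub_eq_add_neg, rpow_add hp, rpow_add hq, div_rpow hp.le hq.le, rpow_neg hq.le,
    rpow_one, rpow_one]
  field_simp

lemma deriv_sub_const_mul_eq_rpow_mul_deriv {F w : ℝ → ℝ} {c s x w' : ℝ} (hx : 0 < x)
    (hF : DifferentiableAt ℝ F x) (hw : HasDerivAt w w' x) (hcw : c * w' = s * F x / x) :
    deriv (fun y => F y - c * w y) x = x ^ s * deriv (fun y => y ^ (-s) * F y) x := by
  rw [HasDerivAt.deriv (f := fun y => F y - c * w y) (hF.hasDerivAt.sub (hw.const_mul c)),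
    HasDerivAt.deriv (f := fun y => y ^ (-s) * F y)
      ((hasDerivAt_rpow_const (Or.inl hx.ne')).mul hF.hasDerivAt), hcw]
  have h₁ : x ^ s * x ^ (-s - 1) = x⁻¹ := by
    rw [← rpow_add hx, show s + (-s - 1) = -1 by ring, rpow_neg_one]
  have h₂ : x ^ s * x ^ (-s) = 1 := by
    rw [← rpow_add hx, add_neg_cancel, rpow_zero]
  linear_combination s * F x * h₁ - deriv F x * h₂

section

variable {μ ρ : ℝ}

lemma hFun_eq (s : ℝ) (hμ : μ ≠ 0) (hρ : ρ ≠ 0) (hρ' : 1 + ρ ≠ 0) :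
    hFun s μ ρ = sinhRatio μ ρ ^ s * xDivSinhProd μ ρ
      - μ / sinh μ * sinhRatio μ ρ ^ s := by
  have hab : ρ * μ / (1 + ρ) + μ / (1 + ρ) = μ := by field_simp; ring
  have hA : sinh (ρ * μ / (1 + ρ)) ≠ 0 := by simp [hμ, hρ, hρ']
  have hB : sinh (μ / (1 + ρ)) ≠ 0 := by simp [hμ, hρ']
  have hS : sinh μ ≠ 0 := by simpa using hμ
  have hsq := sinh_add_sq (ρ * μ / (1 + ρ)) (μ / (1 + ρ))
  rw [hab] at hsq
  unfold hFun sinhRatio xDivSinhProd xDivSinh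
  generalize (sinh (ρ * μ / (1 + ρ)) / sinh (μ / (1 + ρ))) ^ s = R
  generalize sinh (ρ * μ / (1 + ρ)) = A at *
  generalize sinh (μ / (1 + ρ)) = B at *
  field_simp
  linear_combination -R * μ * ρ * hsq

lemma xDivSinh_rpow_mul_xDivSinh_rpow (s : ℝ) (hμ : 0 < μ) (hρ : 0 < ρ) :
    xDivSinh (ρ * μ / (1 + ρ)) ^ (1 - s) * xDivSinh (μ / (1 + ρ)) ^ (1 + s)
      = ρ ^ (-s) * (sinhRatio μ ρ ^ s * xDivSinhProd μ ρ) := by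
  have hpos : ∀ x : ℝ, 0 < x → 0 < xDivSinh x := fun x hx => div_pos hx (sinh_pos_iff.mpr hx)
  have ha : 0 < ρ * μ / (1 + ρ) := by positivity
  have hb : 0 < μ / (1 + ρ) := by positivity
  have hratio : xDivSinh (ρ * μ / (1 + ρ)) / xDivSinh (μ / (1 + ρ)) = ρ / sinhRatio μ ρ := by
    unfold xDivSinh sinhRatio
    field_simp
  have hr : 0 < sinhRatio μ ρ := div_pos (sinh_pos_iff.mpr ha) (sinh_pos_iff.mpr hb)
  rw [rpow_one_sub_mul_rpow_one_add (hpos _ ha) (hpos _ hb), hratio, div_rpow hρ.le hr.le,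
    rpow_neg hr.le, div_inv_eq_mul, mul_assoc]
  rfl

lemma hasDerivAt_sinhRatio (hμ : μ ≠ 0) (hρ : 1 + ρ ≠ 0) :
    HasDerivAt (sinhRatio μ) (μ * sinh μ / ((1 + ρ) ^ 2 * sinh (μ / (1 + ρ)) ^ 2)) ρ := by
  have hB : sinh (μ / (1 + ρ)) ≠ 0 := by simp [hμ, hρ]
  have hab : ρ * μ / (1 + ρ) + μ / (1 + ρ) = μ := by field_simp; ring
  have h1 : HasDerivAt (fun y : ℝ => 1 + y) 1 ρ := (hasDerivAt_id ρ).const_add 1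
  have ha : HasDerivAt (fun y : ℝ => y * μ / (1 + y)) (μ / (1 + ρ) ^ 2) ρ := by
    refine (((hasDerivAt_id ρ).mul_const μ).div h1 hρ).congr_deriv ?_
    simp only [id]
    ring
  have hb : HasDerivAt (fun y : ℝ => μ / (1 + y)) (-(μ / (1 + ρ) ^ 2)) ρ := by
    refine ((hasDerivAt_const ρ μ).div h1 hρ).congr_deriv ?_
    ring
  refine (ha.sinh.div hb.sinh hB).congr_deriv ?_
  rw [← hab, sinh_add, hab]
  field_simp
  ring

lemma hasDerivAt_sinhRatio_rpow (s : ℝ) (hμ : 0 < μ) (hρ : 0 < ρ) :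
    HasDerivAt (fun y => sinhRatio μ y ^ s)
      (sinh μ / μ * (s * (sinhRatio μ ρ ^ s * xDivSinhProd μ ρ) / ρ)) ρ := by
  have hA : 0 < sinh (ρ * μ / (1 + ρ)) := sinh_pos_iff.mpr (by positivity)
  have hB : 0 < sinh (μ / (1 + ρ)) := sinh_pos_iff.mpr (by positivity)
  have hr : 0 < sinhRatio μ ρ := div_pos hA hB
  convert (hasDerivAt_sinhRatio hμ.ne' (by positivity)).rpow_const (p := s) (Or.inl hr.ne')
    using 1
  rw [rpow_sub_one hr.ne']
  unfold xDivSinhProd xDivSinh sinhRatio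
  field_simp

lemma differentiableAt_xDivSinhProd (hμ : μ ≠ 0) (hρ : ρ ≠ 0) (hρ' : 1 + ρ ≠ 0) :
    DifferentiableAt ℝ (xDivSinhProd μ) ρ := by
  have hA : sinh (ρ * μ / (1 + ρ)) ≠ 0 := by simp [hμ, hρ, hρ']
  have hB : sinh (μ / (1 + ρ)) ≠ 0 := by simp [hμ, hρ']
  unfold xDivSinhProd xDivSinh
  fun_prop (disch := assumption)

end

theorem stmt_5_general (s μ : ℝ) (hμ : 0 < μ) (ρ : ℝ) (hρ : 0 < ρ) :
    deriv (fun ρ' => hFun s μ ρ') ρ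
      = ρ ^ s * deriv (fun ρ' =>
          ((ρ'*μ/(1+ρ')) / Real.sinh (ρ'*μ/(1+ρ'))) ^ (1 - s)
            * ((μ/(1+ρ')) / Real.sinh (μ/(1+ρ'))) ^ (1 + s)) ρ := by
  have hev₁ : (fun ρ' => hFun s μ ρ') =ᶠ[nhds ρ]
      fun y => sinhRatio μ y ^ s * xDivSinhProd μ y - μ / sinh μ * sinhRatio μ y ^ s := by
    filter_upwards [eventually_gt_nhds hρ] with y hy
    exact hFun_eq s hμ.ne' hy.ne' (by positivity)
  have hev₂ : (fun ρ' => ((ρ'*μ/(1+ρ')) / Real.sinh (ρ'*μ/(1+ρ'))) ^ (1 - s)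
        * ((μ/(1+ρ')) / Real.sinh (μ/(1+ρ'))) ^ (1 + s)) =ᶠ[nhds ρ]
      fun y => y ^ (-s) * (sinhRatio μ y ^ s * xDivSinhProd μ y) := by
    filter_upwards [eventually_gt_nhds hρ] with y hy
    exact xDivSinh_rpow_mul_xDivSinh_rpow s hμ hy
  have hw := hasDerivAt_sinhRatio_rpow s hμ hρ
  rw [hev₁.deriv_eq, hev₂.deriv_eq]
  refine deriv_sub_const_mul_eq_rpow_mul_deriv hρ
    (hw.differentiableAt.mul (differentiableAt_xDivSinhProd hμ.ne' hρ.ne' (by positivity))) hw ?_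
  field_simp

theorem stmt_5 (s μ : ℝ) (hs0 : 0 < s) (hs1 : s < 1) (hμ : 0 < μ) (ρ : ℝ) (hρ : 0 < ρ) :
    deriv (fun ρ' => hFun s μ ρ') ρ
      = ρ ^ s * deriv (fun ρ' =>
          ((ρ'*μ/(1+ρ')) / Real.sinh (ρ'*μ/(1+ρ'))) ^ (1 - s)
            * ((μ/(1+ρ')) / Real.sinh (μ/(1+ρ'))) ^ (1 + s)) ρ :=
  stmt_5_general s μ hμ ρ hρ
end

section
/- With h_{s,μ} as defined (for 0 < s < 1 and μ > 0), one has the algebraic identity: for every ρ > 0, ρ^s · ((ρμ/(1+ρ))/sinh(ρμ/(1+ρ)))^{1−s} · ((μ/(1+ρ))/sinh(μ/(1+ρ)))^{1+s} − h_{s,μ}(ρ) = (μ/sinh μ) · ( sinh(ρμ/(1+ρ)) / sinh(μ/(1+ρ)) )^s. -/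
open Real

/-!
Split `μ = a + b` with `a = ρμ/(1+ρ)` and `b = μ/(1+ρ)`, so that `ρ = a/b` and
`ρ/(1+ρ)² = ab/μ²`. The powers on the left then collapse to `(sinh a / sinh b)^s · ab/(sinh a sinh b)`,
while the bracket of `h_{s,μ}` equals `ab/(sinh a sinh b) − μ/sinh μ` by
`sinh²(a+b) = sinh²a + sinh²b + 2 cosh(a+b) sinh a sinh b`.
-/

namespace Real

theorem sinh_add_sq (a b : ℝ) :
    sinh (a + b) ^ 2 = sinh a ^ 2 + sinh b ^ 2 + 2 * cosh (a + b) * sinh a * sinh b := by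
  rw [sinh_add, cosh_add]
  linear_combination sinh a ^ 2 * cosh_sq b + sinh b ^ 2 * cosh_sq a

theorem sinh_add_mul_bracket {a b : ℝ} (ha : a ≠ 0) (hb : b ≠ 0) (hab : a + b ≠ 0) :
    (a + b) / sinh (a + b) * ((a + b) / sinh (a + b) * (a * b / (a + b) ^ 2) *
        (sinh a / sinh b + 2 * cosh (a + b) + sinh b / sinh a) - 1)
      = a * b / (sinh a * sinh b) - (a + b) / sinh (a + b) := by
  have hA : sinh a ≠ 0 := sinh_ne_zero.2 ha
  have hB : sinh b ≠ 0 := sinh_ne_zero.2 hb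
  have hAB : sinh (a + b) ≠ 0 := sinh_ne_zero.2 hab
  field_simp
  linear_combination (-(a * b)) * sinh_add_sq a b

end Real

theorem div_rpow_mul_rpow_one_sub_mul_rpow_one_add {a b A B : ℝ} (ha : 0 < a) (hb : 0 < b)
    (hA : 0 < A) (hB : 0 < B) (s : ℝ) :
    (a / b) ^ s * (a / A) ^ (1 - s) * (b / B) ^ (1 + s) = (A / B) ^ s * (a * b / (A * B)) := by
  rw [rpow_sub (by positivity), rpow_one, rpow_add (by positivity), rpow_one,
    div_rpow ha.le hb.le, div_rpow ha.le hA.le, div_rpow hb.le hB.le, div_rpow hA.le hB.le]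
  have : a ^ s ≠ 0 := (rpow_pos_of_pos ha s).ne'
  have : b ^ s ≠ 0 := (rpow_pos_of_pos hb s).ne'
  have : A ^ s ≠ 0 := (rpow_pos_of_pos hA s).ne'
  have : B ^ s ≠ 0 := (rpow_pos_of_pos hB s).ne'
  field_simp

theorem stmt_6_general (s μ : ℝ) (hμ : 0 < μ) (ρ : ℝ) (hρ : 0 < ρ) :
    ρ ^ s * ((ρ*μ/(1+ρ)) / Real.sinh (ρ*μ/(1+ρ))) ^ (1 - s)
        * ((μ/(1+ρ)) / Real.sinh (μ/(1+ρ))) ^ (1 + s) - hFun s μ ρ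
      = (μ / Real.sinh μ) * (Real.sinh (ρ*μ/(1+ρ)) / Real.sinh (μ/(1+ρ))) ^ s := by
  have h1ρ : 1 + ρ ≠ 0 := by positivity
  obtain ⟨a, ha_def, ha⟩ : ∃ a, ρ * μ / (1 + ρ) = a ∧ 0 < a := ⟨_, rfl, by positivity⟩
  obtain ⟨b, hb_def, hb⟩ : ∃ b, μ / (1 + ρ) = b ∧ 0 < b := ⟨_, rfl, by positivity⟩
  have hμ_eq : μ = a + b := by rw [← ha_def, ← hb_def]; field_simp; ring
  have hρ_eq : ρ = a / b := by rw [← ha_def, ← hb_def]; field_simp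
  have hweight : ρ / (1 + ρ) ^ 2 = a * b / (a + b) ^ 2 := by
    rw [← ha_def, ← hb_def]; field_simp; ring
  rw [hFun, ha_def, hb_def, hweight, hρ_eq, hμ_eq,
    div_rpow_mul_rpow_one_sub_mul_rpow_one_add ha hb (sinh_pos_iff.2 ha) (sinh_pos_iff.2 hb)]
  linear_combination (-(sinh a / sinh b) ^ s) * sinh_add_mul_bracket ha.ne' hb.ne' (by positivity)

theorem stmt_6 (s μ : ℝ) (hs0 : 0 < s) (hs1 : s < 1) (hμ : 0 < μ) (ρ : ℝ) (hρ : 0 < ρ) :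
    ρ ^ s * ((ρ*μ/(1+ρ)) / Real.sinh (ρ*μ/(1+ρ))) ^ (1 - s)
        * ((μ/(1+ρ)) / Real.sinh (μ/(1+ρ))) ^ (1 + s) - hFun s μ ρ
      = (μ / Real.sinh μ) * (Real.sinh (ρ*μ/(1+ρ)) / Real.sinh (μ/(1+ρ))) ^ s :=
  stmt_6_general s μ hμ ρ hρ
end
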